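/- Let $\epsilon > 0$, integers $k \ge 2$ and $\alpha \in \{2,\dots,k\}$, and let $h:\mathcal S\times\mathcal X\to\mathbb Z_q^m$ be $k^*$-universal. Let $X$ be a random variable on $\mathcal X$, $S$ uniform on $\mathcal S$ and independent of $X$, $U$ uniform on $\mathbb Z_q^m$. If $m \le H_\alpha(X) - \log_q\big(\frac{\alpha^2}{2\epsilon(\alpha-1)\ln q}\big)$, then $D_\alpha(P_{(h(S,X),S)}\|P_U\times P_S) \le \epsilon$. -/

import Mathlib

/-!
Expanding the `α`-th powers, the sum inside the logarithm of `D_α` equals `q^{m(α-1)}` times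
the average over i.i.d. tuples `p ~ P^{⊗α}` of the probability that `h(S, ·)` is constant on
`p`. By universality this probability is at most `q^{-m(D-1)}`, `D` the number of distinct
entries of `p`, so the sum is at most the expectation of
`∏_i (1 + q^m [p_i repeats an earlier entry])`. Expanding the product, a set `T` of repeating
positions contributes at most `∏_{i ∈ T} i · (q^m γ)^{|T|}` with
`γ = (∑ P^α)^{1/(α-1)} = q^{-H_α(X)}`: match every repeat to the first occurrence of its value
(at most `i` choices), and bound the resulting star-shaped collision sums by the power-mean
inequality `∑ P^c ≤ γ^{c-1}`. Hence the sum is at most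
`∏_{i<α} (1 + i q^{m-H_α}) ≤ exp (α(α-1) q^{m-H_α} / 2)`, and the hypothesis on `m` makes this
at most `q^{ε(α-1)}`.
-/

open Finset

/-- Joint pmf of the pair `(h(S,X), S)` where `S` is uniform on `𝒮` and `X ~ P` is
independent of `S`. -/
noncomputable def jointPMF {S X : Type*} [Fintype S] [Fintype X] {q m : ℕ}
    (h : S → X → (Fin m → Fin q)) (P : X → ℝ) : (Fin m → Fin q) × S → ℝ :=
  fun p => (Fintype.card S : ℝ)⁻¹ * ∑ x : X, if h p.2 x = p.1 then P x else 0

/-- Rényi divergence of order `α > 1` (base-`q` logarithm). -/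
noncomputable def renyiD {Z : Type*} [Fintype Z] (q : ℕ) (α : ℝ) (P Q : Z → ℝ) : ℝ :=
  (α - 1)⁻¹ * Real.logb q (∑ z, P z ^ α * Q z ^ (1 - α))

/-- Rényi entropy of order `α > 1` (base-`q` logarithm). -/
noncomputable def renyiH {X : Type*} [Fintype X] (q : ℕ) (α : ℝ) (P : X → ℝ) : ℝ :=
  (1 - α)⁻¹ * Real.logb q (∑ x, P x ^ α)

theorem sum_pow_succ_le_of_sum_eq_one {X : Type*} [Fintype X] {P : X → ℝ} (hP0 : ∀ x, 0 ≤ P x)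
    (hP1 : ∑ x, P x = 1) {a b : ℕ} (hab : a ≤ b) :
    ∑ x, P x ^ (a + 1) ≤ ((∑ x, P x ^ (b + 1)) ^ (b⁻¹ : ℝ)) ^ a := by
  rcases Nat.eq_zero_or_pos a with rfl | ha
  · simp [hP1]
  have hb : (0 : ℝ) < b := by exact_mod_cast ha.trans_le hab
  have hp : 1 ≤ (b : ℝ) / a := (one_le_div (by positivity)).2 (by exact_mod_cast hab)
  have hpow : ∀ x, P x * (P x ^ a) ^ ((b : ℝ) / a) = P x ^ (b + 1) := fun x => by
    rw [← Real.rpow_natCast (P x) a, ← Real.rpow_mul (hP0 x), mul_div_cancel₀ _ (by positivity),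
      Real.rpow_natCast, pow_succ']
  have hmean := Real.arith_mean_le_rpow_mean univ P (fun x => P x ^ a) (fun x _ => hP0 x) hP1
    (fun x _ => pow_nonneg (hP0 x) a) hp
  simp only [hpow, ← pow_succ'] at hmean
  rwa [← Real.rpow_natCast, ← Real.rpow_mul (sum_nonneg fun x _ => pow_nonneg (hP0 x) _),
    inv_mul_eq_div, ← one_div_div]

/-- As `φ` maps `T` outside `T`, the constraints `p i = p (φ i)` form stars centred outside `T`;
summing out the leaves leaves one power sum per centre. -/
theorem sum_prod_mul_prod_ite_eq_prod {ι X R : Type*} [Fintype ι] [DecidableEq ι] [Fintype X]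
    [DecidableEq X] [CommSemiring R] (P : X → R) (T : Finset ι) (φ : ι → ι)
    (hφ : ∀ i ∈ T, φ i ∉ T) :
    ∑ p : ι → X, (∏ i, P (p i)) * ∏ i ∈ T, (if p i = p (φ i) then 1 else 0)
      = ∏ j ∈ Tᶜ, ∑ x, P x ^ (#{i ∈ T | φ i = j} + 1) := by
  set e := Equiv.piEquivPiSubtypeProd (· ∈ T) (fun _ => X)
  let ψ : {i // i ∈ T} → {j // j ∉ T} := fun i => ⟨φ i, hφ i i.2⟩
  have he : ∀ f g i, e.symm (f, g) i = if h : i ∈ T then f ⟨i, h⟩ else g ⟨i, h⟩ := fun _ _ _ => rfl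
  have hsplit : ∀ f g, (∏ i, P (e.symm (f, g) i)) *
      ∏ i ∈ T, (if e.symm (f, g) i = e.symm (f, g) (φ i) then 1 else 0)
        = (∏ i, P (f i) * if f i = g (ψ i) then 1 else 0) * ∏ j, P (g j) := by
    intro f g
    have hP : ∏ i, P (e.symm (f, g) i) = (∏ i : T, P (f i)) * ∏ j, P (g j) := by
      rw [← prod_mul_prod_compl T, ← prod_coe_sort T,
        prod_subtype Tᶜ (p := (· ∉ T)) fun _ => mem_compl]
      congr 1 <;> exact Fintype.prod_congr _ _ fun i => by simp [he, i.2]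
    have hI : ∏ i ∈ T, (if e.symm (f, g) i = e.symm (f, g) (φ i) then (1 : R) else 0)
        = ∏ i : T, if f i = g (ψ i) then 1 else 0 := by
      rw [← prod_coe_sort T]
      refine Fintype.prod_congr _ _ fun i => ?_
      simp [he, i.2, hφ, ψ]
    rw [hP, hI, prod_mul_distrib]
    ring
  have hfibre : ∀ j : {j // j ∉ T}, #{i : {i // i ∈ T} | ψ i = j} = #{i ∈ T | φ i = j} := by
    intro j
    rw [card_filter, card_filter, ← sum_coe_sort T]
    simp only [ψ, Subtype.ext_iff]
  have hfree : ∀ g : {j // j ∉ T} → X,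
      ∑ f : {i // i ∈ T} → X, (∏ i, P (f i) * if f i = g (ψ i) then 1 else 0) * ∏ j, P (g j)
        = ∏ j, P (g j) ^ (#{i ∈ T | φ i = j} + 1) := by
    intro g
    rw [← sum_mul, ← Fintype.prod_sum fun i (v : X) => P v * if v = g (ψ i) then 1 else 0]
    simp only [mul_ite, mul_one, mul_zero, sum_ite_eq', mem_univ, if_true]
    rw [← prod_fiberwise univ ψ (fun i => P (g (ψ i))), ← prod_mul_distrib]
    refine Fintype.prod_congr _ _ fun j => ?_
    rw [prod_congr rfl fun i hi => by rw [(mem_filter.1 hi).2], prod_const, hfibre, pow_succ]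
  rw [← e.symm.sum_comp, Fintype.sum_prod_type, sum_comm]
  simp only [hsplit, hfree]
  rw [← Fintype.prod_sum fun (j : {j // j ∉ T}) (x : X) => P x ^ (#{i ∈ T | φ i = j} + 1),
    prod_subtype Tᶜ (p := (· ∉ T)) fun _ => mem_compl]

def IsRepeat {n : ℕ} {X : Type*} (p : Fin n → X) (i : Fin n) : Prop :=
  ∃ j < i, p j = p i

instance {n : ℕ} {X : Type*} [DecidableEq X] (p : Fin n → X) : DecidablePred (IsRepeat p) :=
  fun _ => inferInstanceAs (Decidable (∃ _, _))

theorem exists_le_not_isRepeat {n : ℕ} {X : Type*} (p : Fin n → X) (i : Fin n) :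
    ∃ j ≤ i, ¬ IsRepeat p j ∧ p j = p i := by
  classical
  have hne : ({j | p j = p i} : Finset (Fin n)).Nonempty := ⟨i, by simp⟩
  obtain ⟨-, hj⟩ := mem_filter.1 (min'_mem _ hne)
  refine ⟨_, min'_le _ i (by simp), fun ⟨k, hk, hpk⟩ => ?_, hj⟩
  exact (min'_le _ k (by simp [hpk, hj])).not_gt hk

theorem card_filter_not_isRepeat {n : ℕ} {X : Type*} [DecidableEq X] (p : Fin n → X) :
    #{i | ¬ IsRepeat p i} = #(univ.image p) := by
  rw [← card_image_of_injOn (f := p)]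
  · congr 1
    ext x
    simp only [mem_image, mem_filter, mem_univ, true_and]
    constructor
    · rintro ⟨i, -, rfl⟩
      exact ⟨i, rfl⟩
    · rintro ⟨i, rfl⟩
      obtain ⟨j, -, hj, hpj⟩ := exists_le_not_isRepeat p i
      exact ⟨j, hj, hpj⟩
  · intro i hi j hj hij
    simp only [coe_filter, mem_univ, true_and] at hi hj
    by_contra hne
    rcases lt_or_gt_of_ne hne with hlt | hlt
    exacts [hj ⟨i, hlt, hij⟩, hi ⟨j, hlt, hij.symm⟩]

def parentMaps {n : ℕ} (T : Finset (Fin n)) : Finset (Fin n → Fin n) :=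
  Fintype.piFinset fun i => if i ∈ T then Iio i \ T else {i}

theorem card_parentMaps_le {n : ℕ} (T : Finset (Fin n)) :
    #(parentMaps T) ≤ ∏ i ∈ T, (i : ℕ) := by
  rw [parentMaps, Fintype.card_piFinset, ← prod_mul_prod_compl T]
  rw [prod_congr rfl fun i (hi : i ∈ Tᶜ) => by rw [if_neg (mem_compl.1 hi), card_singleton],
    prod_const_one, mul_one]
  refine prod_le_prod' fun i hi => ?_
  rw [if_pos hi, ← Fin.card_Iio]
  exact card_le_card sdiff_subset

theorem prod_ite_isRepeat_le_sum_parentMaps {n : ℕ} {X : Type*} [DecidableEq X]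
    (p : Fin n → X) (T : Finset (Fin n)) :
    (∏ i ∈ T, if IsRepeat p i then 1 else 0 : ℝ)
      ≤ ∑ φ ∈ parentMaps T, ∏ i ∈ T, if p i = p (φ i) then 1 else 0 := by
  have hnonneg : ∀ φ ∈ parentMaps T, (0 : ℝ) ≤ ∏ i ∈ T, if p i = p (φ i) then 1 else 0 :=
    fun φ _ => prod_nonneg fun i _ => by positivity
  by_cases hT : ∀ i ∈ T, IsRepeat p i
  · choose f hf_le hf_first hf_eq using exists_le_not_isRepeat p
    let φ : Fin n → Fin n := fun i => if i ∈ T then f i else i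
    have hφ : φ ∈ parentMaps T := by
      refine Fintype.mem_piFinset.2 fun i => ?_
      by_cases hi : i ∈ T
      · have hlt : f i < i := (hf_le i).lt_of_ne fun h => hf_first i (by rw [h]; exact hT i hi)
        simpa [φ, hi, hlt] using fun h => hf_first i (hT _ h)
      · simp [φ, hi]
    calc (∏ i ∈ T, if IsRepeat p i then 1 else 0 : ℝ)
        = ∏ i ∈ T, if p i = p (φ i) then 1 else 0 :=
          prod_congr rfl fun i hi => by simp [φ, hi, hT i hi, hf_eq]
      _ ≤ _ := single_le_sum hnonneg hφ
  · push Not at hT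
    obtain ⟨i, hi, hni⟩ := hT
    rw [prod_eq_zero hi (if_neg hni)]
    exact sum_nonneg hnonneg

theorem sum_prod_mul_prod_ite_le {ι X : Type*} [Fintype ι] [DecidableEq ι] [Fintype X]
    [DecidableEq X] {P : X → ℝ} (hP0 : ∀ x, 0 ≤ P x) (hP1 : ∑ x, P x = 1) {b : ℕ}
    (hι : Fintype.card ι ≤ b + 1) (T : Finset ι) (φ : ι → ι) (hφ : ∀ i ∈ T, φ i ∉ T) :
    ∑ p : ι → X, (∏ i, P (p i)) * ∏ i ∈ T, (if p i = p (φ i) then 1 else 0)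
      ≤ ((∑ x, P x ^ (b + 1)) ^ (b⁻¹ : ℝ)) ^ #T := by
  have hfibres : ∑ j ∈ Tᶜ, #{i ∈ T | φ i = j} = #T :=
    (card_eq_sum_card_fiberwise fun i hi => mem_compl.2 (hφ i hi)).symm
  rw [sum_prod_mul_prod_ite_eq_prod P T φ hφ, ← hfibres, ← prod_pow_eq_pow_sum]
  refine prod_le_prod (fun j _ => sum_nonneg fun x _ => pow_nonneg (hP0 x) _) fun j hj => ?_
  refine sum_pow_succ_le_of_sum_eq_one hP0 hP1 ?_
  have := card_add_card_compl T
  have := card_pos.2 ⟨j, hj⟩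
  have := card_filter_le T (φ · = j)
  omega

theorem sum_prod_mul_prod_ite_isRepeat_le {n : ℕ} {X : Type*} [Fintype X] [DecidableEq X]
    {P : X → ℝ} (hP0 : ∀ x, 0 ≤ P x) (hP1 : ∑ x, P x = 1) {b : ℕ} (hn : n ≤ b + 1)
    (T : Finset (Fin n)) :
    ∑ p : Fin n → X, (∏ i, P (p i)) * ∏ i ∈ T, (if IsRepeat p i then 1 else 0)
      ≤ (∏ i ∈ T, (i : ℝ)) * ((∑ x, P x ^ (b + 1)) ^ (b⁻¹ : ℝ)) ^ #T := by
  set γ := (∑ x, P x ^ (b + 1)) ^ (b⁻¹ : ℝ)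
  have hγ : 0 ≤ γ := Real.rpow_nonneg (sum_nonneg fun x _ => pow_nonneg (hP0 x) _) _
  have hW : ∀ p : Fin n → X, 0 ≤ ∏ i, P (p i) := fun p => prod_nonneg fun i _ => hP0 _
  calc ∑ p : Fin n → X, (∏ i, P (p i)) * ∏ i ∈ T, (if IsRepeat p i then 1 else 0)
      ≤ ∑ p : Fin n → X, (∏ i, P (p i)) *
          ∑ φ ∈ parentMaps T, ∏ i ∈ T, (if p i = p (φ i) then 1 else 0) :=
        sum_le_sum fun p _ =>
          mul_le_mul_of_nonneg_left (prod_ite_isRepeat_le_sum_parentMaps p T) (hW p)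
    _ = ∑ φ ∈ parentMaps T, ∑ p : Fin n → X,
          (∏ i, P (p i)) * ∏ i ∈ T, (if p i = p (φ i) then 1 else 0) := by
        simp only [mul_sum]
        exact sum_comm
    _ ≤ ∑ φ ∈ parentMaps T, γ ^ #T := by
        refine sum_le_sum fun φ hφ => sum_prod_mul_prod_ite_le hP0 hP1 (by simpa) T φ ?_
        intro i hi
        have := Fintype.mem_piFinset.1 hφ i
        rw [if_pos hi] at this
        exact (mem_sdiff.1 this).2
    _ = #(parentMaps T) * γ ^ #T := by rw [sum_const, nsmul_eq_mul]
    _ ≤ (∏ i ∈ T, (i : ℝ)) * γ ^ #T :=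
        mul_le_mul_of_nonneg_right (by exact_mod_cast card_parentMaps_le T) (pow_nonneg hγ _)

theorem sum_prod_mul_prod_one_add_isRepeat_le {n : ℕ} {X : Type*} [Fintype X] [DecidableEq X]
    {P : X → ℝ} (hP0 : ∀ x, 0 ≤ P x) (hP1 : ∑ x, P x = 1) {b : ℕ} (hn : n ≤ b + 1)
    {t : ℝ} (ht : 0 ≤ t) :
    ∑ p : Fin n → X, (∏ i, P (p i)) * ∏ i, (1 + t * if IsRepeat p i then 1 else 0)
      ≤ ∏ i : Fin n, (1 + t * (∑ x, P x ^ (b + 1)) ^ (b⁻¹ : ℝ) * i) := by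
  set γ := (∑ x, P x ^ (b + 1)) ^ (b⁻¹ : ℝ)
  simp only [prod_one_add, mul_sum, prod_mul_distrib, prod_const]
  rw [sum_comm]
  refine sum_le_sum fun T _ => ?_
  calc ∑ p : Fin n → X, (∏ i, P (p i)) * (t ^ #T * ∏ i ∈ T, if IsRepeat p i then 1 else 0)
      = t ^ #T * ∑ p : Fin n → X, (∏ i, P (p i)) * ∏ i ∈ T, if IsRepeat p i then 1 else 0 := by
        rw [mul_sum]
        exact sum_congr rfl fun p _ => by ring
    _ ≤ t ^ #T * ((∏ i ∈ T, (i : ℝ)) * γ ^ #T) :=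
        mul_le_mul_of_nonneg_left (sum_prod_mul_prod_ite_isRepeat_le hP0 hP1 hn T) (by positivity)
    _ = t ^ #T * γ ^ #T * ∏ i ∈ T, (i : ℝ) := by ring

theorem prod_one_add_mul_le_exp (n : ℕ) {β : ℝ} (hβ : 0 ≤ β) :
    ∏ i : Fin n, (1 + β * i) ≤ Real.exp (β * (n * (n - 1) / 2)) := by
  have hgauss : ∑ i : Fin n, (i : ℝ) = n * (n - 1) / 2 := by
    rcases n.eq_zero_or_pos with rfl | hn
    · simp
    have h := congrArg (Nat.cast : ℕ → ℝ) (sum_range_id_mul_two n)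
    push_cast [Nat.cast_sub hn] at h
    rw [Fin.sum_univ_eq_sum_range (fun i => (i : ℝ)) n]
    linarith
  calc ∏ i : Fin n, (1 + β * i) ≤ Real.exp (∑ i : Fin n, β * i) :=
        Real.prod_one_add_le_exp_sum _ fun i => by positivity
    _ = _ := by rw [← mul_sum, hgauss]

theorem sum_pow_sum_ite_eq {X Y R : Type*} [Fintype X] [Fintype Y] [DecidableEq Y]
    [CommSemiring R] (f : X → Y) (P : X → R) {n : ℕ} (hn : n ≠ 0) :
    ∑ y, (∑ x, if f x = y then P x else 0) ^ n
      = ∑ p : Fin n → X, (∏ i, P (p i)) * if ∀ i j, f (p i) = f (p j) then 1 else 0 := by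
  have : NeZero n := ⟨hn⟩
  simp only [sum_pow', Fintype.piFinset_univ, Fintype.prod_ite_zero]
  rw [sum_comm]
  refine sum_congr rfl fun p _ => ?_
  by_cases hp : ∀ i j, f (p i) = f (p j)
  · have hy : ∀ y, (∀ i, f (p i) = y) ↔ f (p 0) = y :=
      fun y => ⟨fun hy => hy 0, fun hy i => (hp i 0).trans hy⟩
    simp only [hy, sum_ite_eq, mem_univ, if_true, if_pos hp, mul_one]
  · rw [if_neg hp, mul_zero]
    exact sum_eq_zero fun y _ => if_neg fun hy => hp fun i j => (hy i).trans (hy j).symm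

noncomputable def collisionProb {S X Y : Type*} [Fintype S] [DecidableEq Y] {n : ℕ}
    (h : S → X → Y) (x : Fin n → X) : ℝ :=
  (#{s | ∀ i j, h s (x i) = h s (x j)} : ℝ) / Fintype.card S

def IsKStarUniversal {S X : Type*} [Fintype S] {q m : ℕ} (h : S → X → (Fin m → Fin q))
    (k : ℕ) : Prop :=
  ∀ l, 2 ≤ l → l ≤ k → ∀ x : Fin l → X, Function.Injective x →
    collisionProb h x ≤ ((q : ℝ) ^ (m * (l - 1)))⁻¹

section Collision

variable {S X : Type*} [Fintype S] {q m : ℕ} {h : S → X → (Fin m → Fin q)}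

theorem collisionProb_le_one {n : ℕ} (x : Fin n → X) : collisionProb h x ≤ 1 :=
  div_le_one_of_le₀ (by exact_mod_cast card_le_univ _) (Nat.cast_nonneg _)

theorem collisionProb_le_of_isKStarUniversal [DecidableEq X] {k : ℕ} (hU : IsKStarUniversal h k)
    {n : ℕ} (p : Fin n → X) (hk : #(univ.image p) ≤ k) :
    collisionProb h p ≤ (((q : ℝ) ^ m) ^ (#(univ.image p) - 1))⁻¹ := by
  set t := univ.image p
  by_cases hD : 2 ≤ #t
  · let e : Fin #t → X := fun i => t.equivFin.symm i
    have he : Function.Injective e := fun i j hij => t.equivFin.symm.injective (Subtype.ext hij)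
    have hsub : ({s | ∀ i j, h s (p i) = h s (p j)} : Finset S)
        ⊆ ({s | ∀ i j, h s (e i) = h s (e j)} : Finset S) := by
      intro s hs
      simp only [mem_filter, mem_univ, true_and] at hs ⊢
      intro i j
      obtain ⟨a, -, ha⟩ := mem_image.1 (t.equivFin.symm i).2
      obtain ⟨b, -, hb⟩ := mem_image.1 (t.equivFin.symm j).2
      simp only [e, ← ha, ← hb, hs a b]
    calc collisionProb h p ≤ collisionProb h e :=
          div_le_div_of_nonneg_right (by exact_mod_cast card_le_card hsub) (Nat.cast_nonneg _)
      _ ≤ ((q : ℝ) ^ (m * (#t - 1)))⁻¹ := hU _ hD hk e he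
      _ = _ := by rw [pow_mul]
  · rw [show #t - 1 = 0 by omega, pow_zero, inv_one]
    exact collisionProb_le_one p

theorem pow_mul_collisionProb_le [DecidableEq X] (hq : 0 < q) {k n : ℕ}
    (hU : IsKStarUniversal h k) (hn : n ≤ k) (p : Fin n → X) :
    ((q : ℝ) ^ m) ^ (n - 1) * collisionProb h p
      ≤ ∏ i, (1 + (q : ℝ) ^ m * if IsRepeat p i then 1 else 0) := by
  set t : ℝ := (q : ℝ) ^ m
  have ht : 0 < t := by positivity
  have hrep : #{i | IsRepeat p i} + #(univ.image p) = n := by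
    rw [← card_filter_not_isRepeat, card_filter_add_card_filter_not, card_univ, Fintype.card_fin]
  calc t ^ (n - 1) * collisionProb h p
      ≤ t ^ (n - 1) * (t ^ (#(univ.image p) - 1))⁻¹ :=
        mul_le_mul_of_nonneg_left (collisionProb_le_of_isKStarUniversal hU p
          (card_image_le.trans (by simpa using hn))) (by positivity)
    _ = t ^ #{i | IsRepeat p i} := by
        have hD : n ≠ 0 → 0 < #(univ.image p) := fun hn0 =>
          have : NeZero n := ⟨hn0⟩
          card_pos.2 (univ_nonempty.image p)
        rw [show n - 1 = #{i | IsRepeat p i} + (#(univ.image p) - 1) by omega, pow_add,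
          mul_inv_cancel_right₀ (by positivity)]
    _ = ∏ i, t ^ (if IsRepeat p i then 1 else 0) := by
        rw [prod_pow_eq_pow_sum, sum_boole, Nat.cast_id]
    _ ≤ ∏ i, (1 + t * if IsRepeat p i then 1 else 0) := by
        refine prod_le_prod (fun i _ => by positivity) fun i _ => ?_
        split_ifs <;> simp

theorem sum_jointPMF_rpow_mul_eq [Nonempty S] [Fintype X] (hq : 0 < q) (P : X → ℝ) {n : ℕ}
    (hn : n ≠ 0) :
    ∑ z, jointPMF h P z ^ (n : ℝ) * (((q : ℝ) ^ m)⁻¹ * (Fintype.card S : ℝ)⁻¹) ^ (1 - (n : ℝ))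
      = ((q : ℝ) ^ m) ^ (n - 1) * ∑ p : Fin n → X, (∏ i, P (p i)) * collisionProb h p := by
  obtain ⟨k, rfl⟩ : ∃ k, n = k + 1 := ⟨n - 1, by omega⟩
  have hc : (0 : ℝ) < Fintype.card S := by positivity
  have hterm : ∀ z : (Fin m → Fin q) × S,
      jointPMF h P z ^ ((k + 1 : ℕ) : ℝ)
          * (((q : ℝ) ^ m)⁻¹ * (Fintype.card S : ℝ)⁻¹) ^ (1 - ((k + 1 : ℕ) : ℝ))
        = ((q : ℝ) ^ m) ^ k * (Fintype.card S : ℝ)⁻¹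
            * (∑ x, if h z.2 x = z.1 then P x else 0) ^ (k + 1) := by
    intro z
    rw [show 1 - ((k + 1 : ℕ) : ℝ) = -(k : ℝ) by push_cast; ring, Real.rpow_neg (by positivity),
      Real.rpow_natCast, Real.rpow_natCast, ← mul_inv, inv_pow, inv_inv, jointPMF, mul_pow,
      mul_pow, inv_pow, pow_succ _ k]
    field_simp
  simp only [hterm, ← mul_sum, Fintype.sum_prod_type_right,
    sum_pow_sum_ite_eq (h _) P k.succ_ne_zero]
  rw [sum_comm, Nat.add_sub_cancel, mul_assoc, mul_sum]
  congr 1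
  refine sum_congr rfl fun p _ => ?_
  rw [← mul_sum, sum_boole, collisionProb]
  ring

theorem sum_jointPMF_rpow_mul_le_exp [Nonempty S] [Fintype X] [DecidableEq X] (hq : 0 < q)
    {k : ℕ} (hU : IsKStarUniversal h k) {P : X → ℝ} (hP0 : ∀ x, 0 ≤ P x) (hP1 : ∑ x, P x = 1)
    {b : ℕ} (hb : b + 1 ≤ k) :
    ∑ z, jointPMF h P z ^ ((b + 1 : ℕ) : ℝ)
        * (((q : ℝ) ^ m)⁻¹ * (Fintype.card S : ℝ)⁻¹) ^ (1 - ((b + 1 : ℕ) : ℝ))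
      ≤ Real.exp ((q : ℝ) ^ m * (∑ x, P x ^ (b + 1)) ^ (b⁻¹ : ℝ)
          * ((b + 1 : ℕ) * ((b + 1 : ℕ) - 1) / 2)) := by
  rw [sum_jointPMF_rpow_mul_eq hq P (by omega), Nat.add_sub_cancel, mul_sum]
  calc ∑ p : Fin (b + 1) → X, ((q : ℝ) ^ m) ^ b * ((∏ i, P (p i)) * collisionProb h p)
      ≤ ∑ p : Fin (b + 1) → X, (∏ i, P (p i)) *
          ∏ i, (1 + (q : ℝ) ^ m * if IsRepeat p i then 1 else 0) := by
        refine sum_le_sum fun p _ => ?_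
        rw [mul_left_comm]
        exact mul_le_mul_of_nonneg_left (pow_mul_collisionProb_le hq hU hb p)
          (prod_nonneg fun i _ => hP0 _)
    _ ≤ _ := sum_prod_mul_prod_one_add_isRepeat_le hP0 hP1 le_rfl (by positivity)
    _ ≤ _ := prod_one_add_mul_le_exp _ (mul_nonneg (by positivity)
        (Real.rpow_nonneg (sum_nonneg fun x _ => pow_nonneg (hP0 x) _) _))

end Collision

theorem jointPMF_nonneg {S X : Type*} [Fintype S] [Fintype X] {q m : ℕ}
    (h : S → X → (Fin m → Fin q)) {P : X → ℝ} (hP0 : ∀ x, 0 ≤ P x) (z : (Fin m → Fin q) × S) :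
    0 ≤ jointPMF h P z :=
  mul_nonneg (by positivity) (sum_nonneg fun x _ => by split_ifs <;> simp [hP0])

theorem rpow_inv_sum_pow_eq_rpow_neg_renyiH {X : Type*} [Fintype X] {q : ℕ} (hq : 1 < q)
    {P : X → ℝ} {b : ℕ} (hC : 0 < ∑ x, P x ^ (b + 1)) :
    (∑ x, P x ^ (b + 1)) ^ (b⁻¹ : ℝ) = (q : ℝ) ^ (-renyiH q ((b + 1 : ℕ) : ℝ) P) := by
  have hq0 : (0 : ℝ) < q := by positivity
  have hq1 : (q : ℝ) ≠ 1 := by exact_mod_cast hq.ne'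
  simp only [renyiH, Real.rpow_natCast]
  conv_lhs => rw [← Real.rpow_logb hq0 hq1 hC]
  rw [← Real.rpow_mul hq0.le]
  congr 1
  push_cast
  rw [show (1 : ℝ) - (b + 1) = -b by ring, inv_neg]
  ring

theorem renyiD_le_of_sum_le {Z : Type*} [Fintype Z] {q : ℕ} (hq : 1 < q) {α ε : ℝ} (hα : 1 < α)
    (hε : 0 ≤ ε) {P Q : Z → ℝ} (hP : ∀ z, 0 ≤ P z) (hQ : ∀ z, 0 ≤ Q z)
    (hsum : ∑ z, P z ^ α * Q z ^ (1 - α) ≤ (q : ℝ) ^ (ε * (α - 1))) : renyiD q α P Q ≤ ε := by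
  rw [renyiD, inv_mul_le_iff₀ (sub_pos.2 hα)]
  rcases (sum_nonneg fun z _ => mul_nonneg (Real.rpow_nonneg (hP z) α)
    (Real.rpow_nonneg (hQ z) (1 - α))).eq_or_lt with h0 | hpos
  · rw [← h0, Real.logb_zero]
    nlinarith
  · rw [mul_comm]
    exact (Real.logb_le_iff_le_rpow (by exact_mod_cast hq) hpos).2 hsum

theorem rpow_sub_mul_le_of_le_sub_logb {q : ℝ} (hq : 1 < q) {α ε m H : ℝ} (hα : 1 < α)
    (hε : 0 < ε) (hm : m ≤ H - Real.logb q (α ^ 2 / (2 * ε * (α - 1) * Real.log q))) :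
    q ^ (m - H) * (α * (α - 1) / 2) ≤ Real.log q * (ε * (α - 1)) := by
  have hα1 : 0 < α - 1 := by linarith
  have hlog : 0 < Real.log q := Real.log_pos hq
  set K := α ^ 2 / (2 * ε * (α - 1) * Real.log q)
  have hK : 0 < K := by positivity
  have hKle : K ≤ q ^ (H - m) := (Real.logb_le_iff_le_rpow hq hK).1 (by linarith)
  have hrate : q ^ (m - H) ≤ K⁻¹ := by
    rw [show m - H = -(H - m) by ring, Real.rpow_neg (by positivity)]
    exact inv_anti₀ hK hKle
  calc q ^ (m - H) * (α * (α - 1) / 2) ≤ K⁻¹ * (α ^ 2 / 2) :=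
        mul_le_mul hrate (by nlinarith) (by positivity) (by positivity)
    _ = Real.log q * (ε * (α - 1)) := by
        simp only [K]
        field_simp

theorem lhl_main_general {S X : Type*} [Fintype S] [Fintype X] [Nonempty S]
    (q m k α : ℕ) (hq : 2 ≤ q) (hα2 : 2 ≤ α) (hαk : α ≤ k)
    (ε : ℝ) (hε : 0 < ε)
    (h : S → X → (Fin m → Fin q)) (P : X → ℝ)
    (hP0 : ∀ x, 0 ≤ P x) (hP1 : ∑ x, P x = 1)
    (hUniv : ∀ l : ℕ, 2 ≤ l → l ≤ k → ∀ x : Fin l → X, Function.Injective x →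
      ((univ.filter fun s : S => ∀ i j, h s (x i) = h s (x j)).card : ℝ)
          / (Fintype.card S : ℝ)
        ≤ ((q : ℝ) ^ (m * (l - 1)))⁻¹)
    (hmH : (m : ℝ) ≤ renyiH q α P
        - Real.logb q ((α : ℝ) ^ 2 / (2 * ε * ((α : ℝ) - 1) * Real.log q))) :
    renyiD q α (jointPMF h P) (fun _ => ((q : ℝ) ^ m)⁻¹ * (Fintype.card S : ℝ)⁻¹) ≤ ε := by
  classical
  obtain ⟨b, rfl⟩ : ∃ b, α = b + 1 := ⟨α - 1, by omega⟩
  have hq1 : (1 : ℝ) < q := by exact_mod_cast hq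
  have hb : (0 : ℝ) < b := by exact_mod_cast (by omega : 0 < b)
  have hC : 0 < ∑ x, P x ^ (b + 1) := by
    obtain ⟨x, -, hx⟩ := exists_lt_of_sum_lt (by simp [hP1] : ∑ _x : X, (0 : ℝ) < ∑ x, P x)
    exact (pow_pos hx _).trans_le (single_le_sum (fun y _ => pow_nonneg (hP0 y) _) (mem_univ x))
  have hrate : (q : ℝ) ^ m * (∑ x, P x ^ (b + 1)) ^ (b⁻¹ : ℝ)
        * ((b + 1 : ℕ) * ((b + 1 : ℕ) - 1) / 2 : ℝ) ≤ Real.log q * (ε * ((b + 1 : ℕ) - 1)) := by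
    rw [rpow_inv_sum_pow_eq_rpow_neg_renyiH (by omega : 1 < q) hC, ← Real.rpow_natCast,
      ← Real.rpow_add (by positivity), ← sub_eq_add_neg]
    exact rpow_sub_mul_le_of_le_sub_logb hq1 (by push_cast; linarith) hε hmH
  refine renyiD_le_of_sum_le (by omega : 1 < q) (by push_cast; linarith) hε.le
    (jointPMF_nonneg h hP0) (fun _ => by positivity) ?_
  refine (sum_jointPMF_rpow_mul_le_exp (by omega) hUniv hP0 hP1 hαk).trans ?_
  rw [Real.rpow_def_of_pos (by positivity : (0 : ℝ) < q)]
  exact Real.exp_le_exp.2 hrate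

/-- Theorem 3.1: for a `k*`-universal hash function and integer `α ∈ {2,…,k}`, if
`m ≤ H_α(X) - log_q(α²/(2ε(α-1)ln q))` then `D_α(P_{(h(S,X),S)} ‖ P_U × P_S) ≤ ε`. -/
theorem lhl_main {S X : Type*} [Fintype S] [Fintype X] [Nonempty S] [Nonempty X]
    (q m k α : ℕ) (hq : 2 ≤ q) (hm : 1 ≤ m) (hk : 2 ≤ k) (hα2 : 2 ≤ α) (hαk : α ≤ k)
    (ε : ℝ) (hε : 0 < ε)
    (h : S → X → (Fin m → Fin q)) (P : X → ℝ)
    (hP0 : ∀ x, 0 ≤ P x) (hP1 : ∑ x, P x = 1)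
    (hUniv : ∀ l : ℕ, 2 ≤ l → l ≤ k → ∀ x : Fin l → X, Function.Injective x →
      ((univ.filter fun s : S => ∀ i j, h s (x i) = h s (x j)).card : ℝ)
          / (Fintype.card S : ℝ)
        ≤ ((q : ℝ) ^ (m * (l - 1)))⁻¹)
    (hmH : (m : ℝ) ≤ renyiH q α P
        - Real.logb q ((α : ℝ) ^ 2 / (2 * ε * ((α : ℝ) - 1) * Real.log q))) :
    renyiD q α (jointPMF h P) (fun _ => ((q : ℝ) ^ m)⁻¹ * (Fintype.card S : ℝ)⁻¹) ≤ ε :=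
  lhl_main_general q m k α hq hα2 hαk ε hε h P hP0 hP1 hUniv hmH
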